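/- Let G be a group and T a countably infinite, locally finite subgroup of G. Regard the group ring ℤ[G] as a representation of T by restricting the left regular representation of G (T acts by left multiplication). Then the group cohomology H^s(T; ℤ[G]) vanishes for every natural number s ≠ 1. -/

import Mathlib

/-!
For a finite subgroup `H ≤ T`, projecting `ℤ[G]` onto the coefficients indexed by a transversal
of the (free) `H`-orbits gives a map `π` with `∑ h ∈ H, h π h⁻¹ = 1`, and `π` yields a contracting
homotopy of the inhomogeneous cochains that is valid on all tuples whose first entry lies in `H`.
Write `T` as an increasing union of finite subgroups `S i`. A cocycle `f` of degree `n + 2` is, on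
`S i`-headed tuples, the coboundary of some `c i`; on `S i`-headed tuples the difference of two such
primitives is a cocycle of degree `n + 1 ≥ 1`, hence a coboundary, which lets us choose `c (i + 1)`
equal to `c i` there. The `c i` therefore stabilise pointwise, and their limit is a primitive of `f`.
(In degree `1` the difference would have degree `0`, where no such correction exists.) In degree
`0`, a `T`-invariant finitely supported function on `G` vanishes because `T`-orbits are infinite.
-/

open Finset inhomogeneousCochains

universe u

namespace Fin

variable {α : Type*} (op : α → α → α) {n : ℕ}

theorem contractNth_zero_cons (a : α) (g : Fin (n + 1) → α) :
    contractNth 0 op (cons a g) = cons (op a (g 0)) (tail g) := by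
  ext k
  refine Fin.cases ?_ (fun j => ?_) k
  · rw [contractNth_apply_of_eq _ _ _ _ rfl]
    simp
  · rw [contractNth_apply_of_gt _ _ _ _ (by simp)]
    simp [tail]

theorem contractNth_succ_cons (a : α) (g : Fin (n + 1) → α) (j : Fin (n + 1)) :
    contractNth j.succ op (cons a g) = cons a (contractNth j op g) := by
  ext k
  refine Fin.cases ?_ (fun i => ?_) k
  · rw [contractNth_apply_of_lt _ _ _ _ (by simp)]
    simp
  · rw [cons_succ]
    rcases lt_trichotomy (i : ℕ) j with h | h | h
    · rw [contractNth_apply_of_lt _ _ _ _ (by simpa using h), contractNth_apply_of_lt _ _ _ _ h]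
      simp
    · rw [contractNth_apply_of_eq _ _ _ _ (by simpa using h), contractNth_apply_of_eq _ _ _ _ h]
      simp
    · rw [contractNth_apply_of_gt _ _ _ _ (by simpa using h), contractNth_apply_of_gt _ _ _ _ h]
      simp

theorem contractNth_mem {M S : Type*} [Mul M] [SetLike S M] [MulMemClass S M] {s : S}
    {g : Fin (n + 1) → M} (hg : ∀ i, g i ∈ s) (j : Fin (n + 1)) (i : Fin n) :
    contractNth j (· * ·) g i ∈ s := by
  rcases lt_trichotomy (i : ℕ) j with h | h | h
  · rw [contractNth_apply_of_lt _ _ _ _ h]; exact hg _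
  · rw [contractNth_apply_of_eq _ _ _ _ h]; exact mul_mem (hg _) (hg _)
  · rw [contractNth_apply_of_gt _ _ _ _ h]; exact hg _

end Fin

theorem MulAction.exists_transversal_of_isCancelSMul (H X : Type*) [Group H] [MulAction H X]
    [IsCancelSMul H X] : ∃ R : Set X, ∀ x, ∃! h : H, h⁻¹ • x ∈ R := by
  refine ⟨Set.range (Quotient.out (s := orbitRel H X)), fun x => ?_⟩
  obtain ⟨h, hh⟩ : ∃ h : H, h • x = (⟦x⟧ : Quotient (orbitRel H X)).out :=
    Quotient.mk_out (s := orbitRel H X) x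
  refine ⟨h⁻¹, ⟨_, by simpa using hh.symm⟩, ?_⟩
  rintro h' ⟨c, hc⟩
  have hcx : c = ⟦x⟧ := by
    rw [← Quotient.out_eq c, hc, Quotient.eq]
    exact ⟨h'⁻¹, rfl⟩
  rw [hcx, ← hh] at hc
  rw [← inv_inv h', IsCancelSMul.right_cancel _ _ _ hc]

theorem exists_eqOn_of_eqOn_succ {α β : Type*} {s : ℕ → Set α} (hs : Monotone s)
    (hexh : ∀ a, ∃ i, a ∈ s i) {c : ℕ → α → β} (hc : ∀ i, Set.EqOn (c (i + 1)) (c i) (s i)) :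
    ∃ cLim : α → β, ∀ i, Set.EqOn cLim (c i) (s i) := by
  have stable : ∀ i j, i ≤ j → Set.EqOn (c j) (c i) (s i) := fun i j hij => by
    induction j, hij using Nat.le_induction with
    | base => exact Set.eqOn_refl _ _
    | succ j hij ih => exact ((hc j).mono (hs hij)).trans ih
  choose N hN using hexh
  refine ⟨fun a => c (N a) a, fun i a ha => ?_⟩
  exact (stable _ _ (le_max_left _ i) (hN a)).symm.trans (stable _ _ (le_max_right _ _) ha)

theorem Subgroup.exists_monotone_finite_of_locallyFinite {Γ : Type*} [Group Γ] [Countable Γ]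
    (hLF : ∀ H : Subgroup Γ, H.FG → Finite H) :
    ∃ S : ℕ → Subgroup Γ, Monotone S ∧ (∀ i, Finite (S i)) ∧ ∀ γ, ∃ i, γ ∈ S i := by
  obtain ⟨e, he⟩ := exists_surjective_nat Γ
  refine ⟨fun i => closure (e '' Set.Iic i), fun i j hij => ?_, fun i => ?_, fun γ => ?_⟩
  · exact closure_mono (Set.image_mono (Set.Iic_subset_Iic.2 hij))
  · exact hLF _ (fg_iff _ |>.2 ⟨_, rfl, (Set.finite_Iic i).image e⟩)
  · obtain ⟨i, rfl⟩ := he γ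
    exact ⟨i, subset_closure ⟨i, Set.self_mem_Iic, rfl⟩⟩

variable {k Γ : Type u} [CommRing k] [Group Γ] {A : Rep.{u} k Γ}

/-- By Higman's criterion, such a `π` exists iff, as a representation of `H`, `A` is a direct
summand of a representation induced from the trivial subgroup. -/
def Rep.IsHigmanMap (H : Subgroup Γ) [Fintype H] (π : A →ₗ[k] A) : Prop :=
  ∑ h : H, A.ρ h ∘ₗ π ∘ₗ A.ρ (h : Γ)⁻¹ = LinearMap.id

namespace inhomogeneousCochains

theorem d_apply_cons {n : ℕ} (u : (Fin (n + 1) → Γ) → A) (a : Γ) (g : Fin (n + 1) → Γ) :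
    d A (n + 1) u (Fin.cons a g) = A.ρ a (u g) - u (Fin.cons (a * g 0) (Fin.tail g)) -
      ∑ j : Fin (n + 1), (-1 : k) ^ ((j : ℕ) + 1) •
        u (Fin.cons a (Fin.contractNth j (· * ·) g)) := by
  simp only [d_hom_apply, Fin.sum_univ_succ (n := n + 1), Fin.contractNth_zero_cons,
    Fin.contractNth_succ_cons, Fin.cons_zero, Fin.cons_succ, Fin.val_zero, Fin.val_succ,
    zero_add, pow_one, pow_succ _ (_ + 1), mul_neg_one, neg_smul, one_smul, sum_neg_distrib]
  abel

theorem d_apply_congr {n : ℕ} {K : Subgroup Γ} {v w : (Fin n → Γ) → A}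
    (hvw : Set.EqOn v w {g | ∀ i, g i ∈ K}) {g : Fin (n + 1) → Γ}
    (hg : ∀ i, g i ∈ K) : d A n v g = d A n w g := by
  simp only [d_hom_apply]
  rw [hvw fun i => hg i.succ]
  congr 1
  exact sum_congr rfl fun j _ => by rw [hvw (Fin.contractNth_mem hg j)]

theorem d_d_apply {n : ℕ} (u : (Fin n → Γ) → A) (g : Fin (n + 2) → Γ) :
    d A (n + 1) (d A n u) g = 0 :=
  congrFun (LinearMap.congr_fun (congrArg ModuleCat.Hom.hom
    (groupCohomology.inhomogeneousCochains.d_comp_d n A)) u) g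

section Transfer

variable {H K : Subgroup Γ} [Fintype H] [Fintype K] {π : A →ₗ[k] A}

variable (H π) in
def transferHomotopy {n : ℕ} (u : (Fin (n + 1) → Γ) → A) (g : Fin n → Γ) : A :=
  ∑ h : H, A.ρ h (π (u (Fin.cons (h : Γ)⁻¹ g)))

theorem transferHomotopy_eq_zero {n : ℕ} {u : (Fin (n + 1) → Γ) → A}
    (hu : Set.EqOn u 0 {g | g 0 ∈ H}) : transferHomotopy H π u = 0 := by
  funext g
  exact sum_eq_zero fun h _ => by rw [hu (by simp), Pi.zero_apply, map_zero, map_zero]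

theorem d_transferHomotopy_add_transferHomotopy_d (hπ : Rep.IsHigmanMap H π) {n : ℕ}
    (u : (Fin (n + 1) → Γ) → A) {g : Fin (n + 1) → Γ} (hg : g 0 ∈ H) :
    d A n (transferHomotopy H π u) g + transferHomotopy H π (d A (n + 1) u) g = u g := by
  have average : ∑ h : H, A.ρ h (π (A.ρ (h : Γ)⁻¹ (u g))) = u g := by
    simpa using congr($hπ (u g))
  have reindex : A.ρ (g 0) (transferHomotopy H π u fun i => g i.succ) =
      ∑ h : H, A.ρ h (π (u (Fin.cons ((h : Γ)⁻¹ * g 0) (Fin.tail g)))) := by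
    rw [transferHomotopy, map_sum]
    refine Fintype.sum_equiv (Equiv.mulLeft ⟨g 0, hg⟩) _ _ fun h => ?_
    simp only [Equiv.coe_mulLeft, Subgroup.coe_mul, map_mul, mul_inv_rev, inv_mul_cancel_right,
      Module.End.mul_apply]
    rfl
  have expand : transferHomotopy H π (d A (n + 1) u) g =
      u g - ∑ h : H, A.ρ h (π (u (Fin.cons ((h : Γ)⁻¹ * g 0) (Fin.tail g)))) -
        ∑ j : Fin (n + 1), (-1 : k) ^ ((j : ℕ) + 1) •
          transferHomotopy H π u (Fin.contractNth j (· * ·) g) := by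
    simp only [transferHomotopy, d_apply_cons u, map_sub, map_sum, map_smul, sum_sub_distrib,
      average, smul_sum]
    rw [sum_comm (s := univ)]
  rw [d_hom_apply, expand, reindex]
  abel

theorem eqOn_d_transferHomotopy (hπ : Rep.IsHigmanMap H π) {n : ℕ}
    {f : (Fin (n + 1) → Γ) → A} (hf : Set.EqOn (d A (n + 1) f) 0 {g | g 0 ∈ H}) :
    Set.EqOn (d A n (transferHomotopy H π f)) f {g | g 0 ∈ H} := fun g hg => by
  simpa [transferHomotopy_eq_zero hf] using d_transferHomotopy_add_transferHomotopy_d hπ f hg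

theorem exists_extend_of_le {πH πK : A →ₗ[k] A} (hHK : H ≤ K) (hπH : Rep.IsHigmanMap H πH)
    (hπK : Rep.IsHigmanMap K πK) {n : ℕ} {f : (Fin (n + 2) → Γ) → A} (hf : d A (n + 2) f = 0)
    {c : (Fin (n + 1) → Γ) → A} (hc : Set.EqOn (d A (n + 1) c) f {g | g 0 ∈ H}) :
    ∃ c' : (Fin (n + 1) → Γ) → A,
      Set.EqOn (d A (n + 1) c') f {g | g 0 ∈ K} ∧ Set.EqOn c' c {g | g 0 ∈ H} := by
  set u := transferHomotopy K πK f
  have hu : Set.EqOn (d A (n + 1) u) f {g | g 0 ∈ K} :=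
    eqOn_d_transferHomotopy hπK fun g _ => by rw [hf]
  have hw : Set.EqOn (d A (n + 1) (u - c)) 0 {g | g 0 ∈ H} := fun g hg => by
    simp [map_sub, hu (hHK hg), hc hg]
  refine ⟨u - d A n (transferHomotopy H πH (u - c)), fun g hg => ?_, fun g hg => ?_⟩
  · simp [d_d_apply (transferHomotopy H πH (u - c)) g, hu hg]
  · simp [eqOn_d_transferHomotopy hπH hw hg]

end Transfer

theorem exists_d_eq_of_exhaustion (S : ℕ → Subgroup Γ) [∀ i, Fintype (S i)] (hS : Monotone S)
    (hexh : ∀ γ, ∃ i, γ ∈ S i) {π : ℕ → A →ₗ[k] A} (hπ : ∀ i, Rep.IsHigmanMap (S i) (π i))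
    {n : ℕ} {f : (Fin (n + 2) → Γ) → A} (hf : d A (n + 2) f = 0) :
    ∃ c : (Fin (n + 1) → Γ) → A, d A (n + 1) c = f := by
  choose! next hnext_d hnext_eq using fun i (c : (Fin (n + 1) → Γ) → A)
    (hc : Set.EqOn (d A (n + 1) c) f {g | g 0 ∈ S i}) =>
    exists_extend_of_le (hS i.le_succ) (hπ i) (hπ (i + 1)) hf hc
  let c : ℕ → (Fin (n + 1) → Γ) → A := fun i =>
    Nat.rec (motive := fun _ => (Fin (n + 1) → Γ) → A) (transferHomotopy (S 0) (π 0) f) next i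
  have hc_d : ∀ i, Set.EqOn (d A (n + 1) (c i)) f {g | g 0 ∈ S i} := fun i => by
    induction i with
    | zero => exact eqOn_d_transferHomotopy (hπ 0) fun g _ => by rw [hf]
    | succ i ih => exact hnext_d i (c i) ih
  obtain ⟨cLim, hcLim⟩ := exists_eqOn_of_eqOn_succ (c := c)
    (s := fun i => {g : Fin (n + 1) → Γ | g 0 ∈ S i}) (fun i j hij g hg => hS hij hg)
    (fun g => hexh (g 0)) fun i => hnext_eq i (c i) (hc_d i)
  refine ⟨cLim, funext fun g => ?_⟩
  have hevent : ∀ j, ∀ᶠ i in Filter.atTop, g j ∈ S i := fun j =>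
    Filter.eventually_atTop.2 <| (hexh (g j)).imp fun i hi _ hij => hS hij hi
  obtain ⟨i, hi⟩ := (Filter.eventually_all.2 hevent).exists
  rw [d_apply_congr (fun g' hg' => hcLim i (hg' 0)) hi]
  exact hc_d i (hi 0)

end inhomogeneousCochains

theorem subsingleton_groupCohomology_succ_of_forall_exists_d_eq {n : ℕ}
    (h : ∀ f : (Fin (n + 1) → Γ) → A, d A (n + 1) f = 0 → ∃ c, d A n c = f) :
    Subsingleton (groupCohomology A (n + 1)) := by
  rw [← ModuleCat.isZero_iff_subsingleton, groupCohomology,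
    ← HomologicalComplex.exactAt_iff_isZero_homology,
    HomologicalComplex.exactAt_iff' _ n (n + 1) (n + 2) (by simp) (by simp),
    CategoryTheory.ShortComplex.moduleCat_exact_iff]
  intro f hf
  rw [← groupCohomology.inhomogeneousCochains.d_def A n,
    ← groupCohomology.inhomogeneousCochains.d_def A (n + 1)] at h
  exact h f hf

section OfMulAction

variable (k) {X : Type u} [MulAction Γ X] [IsCancelSMul Γ X]

theorem Rep.exists_isHigmanMap_ofMulAction (H : Subgroup Γ) [Fintype H] :
    ∃ π, IsHigmanMap (A := ofMulAction k Γ X) H π := by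
  classical
  obtain ⟨R, hR⟩ := MulAction.exists_transversal_of_isCancelSMul H X
  refine ⟨(MonoidAlgebra.coeffLinearEquiv k).symm.toLinearMap ∘ₗ
    (Finsupp.supported k k R).subtype ∘ₗ Finsupp.restrictDom k k R ∘ₗ
      (MonoidAlgebra.coeffLinearEquiv k).toLinearMap, ?_⟩
  refine LinearMap.ext fun f => MonoidAlgebra.ext <| Finsupp.ext fun x => ?_
  obtain ⟨h₀, hh₀, huniq⟩ := hR x
  simp only [LinearMap.coe_sum, LinearMap.coe_comp, LinearEquiv.coe_coe, Submodule.coe_subtype,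
    Finset.sum_apply, Function.comp_apply, MonoidAlgebra.coeffLinearEquiv_apply,
    Finsupp.restrictDom_apply, MonoidAlgebra.coeffLinearEquiv_symm_apply, MonoidAlgebra.coeff_sum,
    Finsupp.coe_finsetSum, Representation.coeff_ofMulAction, LinearMap.id_coe, id_eq]
  rw [Fintype.sum_eq_single h₀ fun h hne => ?_]
  · have hx₀ : (h₀ : Γ)⁻¹ • x ∈ R := hh₀
    simp [hx₀]
  · have hx : (h : Γ)⁻¹ • x ∉ R := fun hm => hne (huniq h hm)
    simp [hx]

theorem Representation.subsingleton_invariants_ofMulAction [Infinite Γ] :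
    Subsingleton (ofMulAction k Γ X).invariants := by
  refine subsingleton_of_forall_eq 0 fun ⟨f, hf⟩ => Subtype.ext ?_
  by_contra hne
  obtain ⟨x, hx⟩ : ∃ x, f.coeff x ≠ 0 := by
    by_contra! h
    exact hne (MonoidAlgebra.ext (Finsupp.ext h))
  have hmem : ∀ γ : Γ, γ • x ∈ (f.coeff.support : Set X) := fun γ => by
    have h := congr(($(hf γ⁻¹)).coeff x)
    rw [coeff_ofMulAction, inv_inv] at h
    rwa [Finset.mem_coe, Finsupp.mem_support_iff, h]
  exact Set.infinite_of_injective_forall_mem (fun a b hab => IsCancelSMul.right_cancel a b x hab)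
    hmem f.coeff.support.finite_toSet

theorem subsingleton_groupCohomology_zero_ofMulAction [Infinite Γ] :
    Subsingleton (groupCohomology (Rep.ofMulAction k Γ X) 0) :=
  have := Representation.subsingleton_invariants_ofMulAction k (Γ := Γ) (X := X)
  (groupCohomology.H0Iso _).toLinearEquiv.toEquiv.subsingleton

theorem subsingleton_groupCohomology_add_two_ofMulAction [Countable Γ]
    (hLF : ∀ H : Subgroup Γ, H.FG → Finite H) (n : ℕ) :
    Subsingleton (groupCohomology (Rep.ofMulAction k Γ X) (n + 2)) := by
  obtain ⟨S, hS, hfin, hexh⟩ := Subgroup.exists_monotone_finite_of_locallyFinite hLF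
  have := fun i => Fintype.ofFinite (S i)
  choose π hπ using fun i => Rep.exists_isHigmanMap_ofMulAction k (X := X) (S i)
  exact subsingleton_groupCohomology_succ_of_forall_exists_d_eq fun f hf =>
    exists_d_eq_of_exhaustion S hS hexh hπ hf

end OfMulAction

/-- If `T` is a countably infinite, locally finite subgroup of `G`, and `ℤ[G]` is regarded
as a representation of `T` by restricting the left regular representation of `G` (so `T`
acts by left multiplication on basis elements), then `H^s(T; ℤ[G]) = 0` for all `s ≠ 1`. -/
theorem groupCohomology_restriction_leftRegular_vanishes
    {G : Type} [Group G] (T : Subgroup G) [Countable T] [Infinite T]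
    (hLF : ∀ H : Subgroup T, H.FG → Finite H) :
    ∀ s : ℕ, s ≠ 1 → Subsingleton (groupCohomology (Rep.ofMulAction ℤ T G) s) := by
  rintro (_ | _ | n) hs
  · exact subsingleton_groupCohomology_zero_ofMulAction ℤ
  · exact absurd rfl hs
  · exact subsingleton_groupCohomology_add_two_ofMulAction ℤ hLF n
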